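/- arXiv:1406.7039 — 3 statements merged into one kernel-verified Lean document; each statement's English description precedes it below -/
import Mathlib

section
/- Let p ≥ 3 be an odd integer and let f be a real-valued function on the positive integers satisfying: f(q) = f(q − 2p) − (p² − 1) whenever q > 2p, and f(q) = 1 − p² − f(2p − q) whenever p ≤ q < 2p. Then for all integers n ≥ 1 and 0 < r < p: if n is even, f(np + r) = f(r) − n(p² − 1)/2, and if n is odd, f(np + r) = −f(p − r) − (n + 1)(p² − 1)/2. -/
/-!
Iterating the first recursion `k` times gives `f (2kp + q) = f q - k (p² - 1)` for every `q > 0`.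
For even `n = 2k` this is the claim with `q = r`; for odd `n = 2k + 1` take `q = p + r` and apply
the reflection `f (p + r) = 1 - p² - f (p - r)` once.
-/

theorem apply_two_mul_mul_add_of_shift {p : ℤ} (hp : 0 ≤ p) {f : ℤ → ℝ}
    (h1 : ∀ q : ℤ, 2 * p < q → f q = f (q - 2 * p) - ((p : ℝ) ^ 2 - 1))
    {k : ℤ} (hk : 0 ≤ k) {q : ℤ} (hq : 0 < q) :
    f (2 * k * p + q) = f q - k * ((p : ℝ) ^ 2 - 1) := by
  induction k, hk using Int.leInduction with
  | base => simp
  | succ k hk ih =>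
    rw [h1 (2 * (k + 1) * p + q) (by nlinarith), show 2 * (k + 1) * p + q - 2 * p = 2 * k * p + q by ring, ih]
    push_cast
    ring

theorem glm_recursion_odd_general (p : ℤ) (f : ℤ → ℝ)
    (h1 : ∀ q : ℤ, 2 * p < q → f q = f (q - 2 * p) - ((p : ℝ) ^ 2 - 1))
    (h2 : ∀ q : ℤ, p ≤ q → q < 2 * p → f q = 1 - (p : ℝ) ^ 2 - f (2 * p - q)) :
    ∀ n r : ℤ, 1 ≤ n → 0 < r → r < p →
      (Even n → f (n * p + r) = f r - (n : ℝ) * ((p : ℝ) ^ 2 - 1) / 2) ∧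
      (Odd n → f (n * p + r) = -f (p - r) - ((n : ℝ) + 1) * ((p : ℝ) ^ 2 - 1) / 2) := by
  intro n r hn hr hrp
  have hp : 0 ≤ p := by linarith
  constructor
  · rintro ⟨k, rfl⟩
    rw [show (k + k) * p + r = 2 * k * p + r by ring,
      apply_two_mul_mul_add_of_shift hp h1 (by linarith) hr]
    push_cast
    ring
  · rintro ⟨k, rfl⟩
    rw [show (2 * k + 1) * p + r = 2 * k * p + (p + r) by ring,
      apply_two_mul_mul_add_of_shift hp h1 (by linarith) (by linarith),
      h2 (p + r) (by linarith) (by linarith), show 2 * p - (p + r) = p - r by ring]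
    push_cast
    ring

/-- Unfolding of the Gordon–Litherland–Murasugi signature recursion for `p` odd:
if `f(q) = f(q − 2p) − (p² − 1)` for `q > 2p` and `f(q) = 1 − p² − f(2p − q)` for
`p ≤ q < 2p`, then for `n ≥ 1` and `0 < r < p`:
`f(np + r) = f(r) − n(p² − 1)/2` when `n` is even, and
`f(np + r) = −f(p − r) − (n + 1)(p² − 1)/2` when `n` is odd. -/
theorem glm_recursion_odd (p : ℤ) (hp : 3 ≤ p) (hpodd : Odd p) (f : ℤ → ℝ)
    (h1 : ∀ q : ℤ, 2 * p < q → f q = f (q - 2 * p) - ((p : ℝ) ^ 2 - 1))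
    (h2 : ∀ q : ℤ, p ≤ q → q < 2 * p → f q = 1 - (p : ℝ) ^ 2 - f (2 * p - q)) :
    ∀ n r : ℤ, 1 ≤ n → 0 < r → r < p →
      (Even n → f (n * p + r) = f r - (n : ℝ) * ((p : ℝ) ^ 2 - 1) / 2) ∧
      (Odd n → f (n * p + r) = -f (p - r) - ((n : ℝ) + 1) * ((p : ℝ) ^ 2 - 1) / 2) :=
  glm_recursion_odd_general p f h1 h2
end

section
/- Let p ≥ 4 be an even integer and let f be a real-valued function on the positive integers satisfying: f(q) = f(q − 2p) − p² whenever q > 2p, and f(q) = 2 − p² − f(2p − q) whenever p ≤ q < 2p. Then for all integers n ≥ 1 and 0 < r < p: if n is even, f(np + r) = f(r) − np²/2, and if n is odd, f(np + r) = −f(p − r) − (n + 1)p²/2 + 2. -/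
/-!
Applying the first rule `k` times shifts the argument by `2kp` at cost `kp²`, which settles
even `n = 2k`. For odd `n = 2k + 1` one first shifts `(2k + 1)p + r` down to `p + r`, and then the
reflection rule at `p + r` brings in `f (p - r)`.
-/

theorem apply_add_two_mul_natCast_mul {f : ℤ → ℝ} {p : ℤ} (hp : 0 ≤ p)
    (h1 : ∀ q : ℤ, 2 * p < q → f q = f (q - 2 * p) - (p : ℝ) ^ 2) {q : ℤ} (hq : 0 < q) (k : ℕ) :
    f (q + 2 * k * p) = f q - k * (p : ℝ) ^ 2 := by
  induction k with
  | zero => simp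
  | succ k ih =>
    have hlt : 2 * p < q + 2 * (k + 1 : ℕ) * p := by push_cast; nlinarith
    rw [h1 _ hlt, show q + 2 * (k + 1 : ℕ) * p - 2 * p = q + 2 * k * p by push_cast; ring, ih]
    push_cast
    ring

theorem glm_recursion_even_general (p : ℤ) (f : ℤ → ℝ)
    (h1 : ∀ q : ℤ, 2 * p < q → f q = f (q - 2 * p) - (p : ℝ) ^ 2)
    (h2 : ∀ q : ℤ, p ≤ q → q < 2 * p → f q = 2 - (p : ℝ) ^ 2 - f (2 * p - q)) :
    ∀ n r : ℤ, 1 ≤ n → 0 < r → r < p →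
      (Even n → f (n * p + r) = f r - (n : ℝ) * (p : ℝ) ^ 2 / 2) ∧
      (Odd n → f (n * p + r) = -f (p - r) - ((n : ℝ) + 1) * (p : ℝ) ^ 2 / 2 + 2) := by
  intro n r hn hr0 hrp
  have hp : 0 ≤ p := by omega
  constructor
  · rintro ⟨k, rfl⟩
    lift k to ℕ using by omega
    rw [show (k + k : ℤ) * p + r = r + 2 * k * p by ring,
      apply_add_two_mul_natCast_mul hp h1 hr0]
    push_cast
    ring
  · rintro ⟨k, rfl⟩
    lift k to ℕ using by omega
    rw [show (2 * k + 1 : ℤ) * p + r = (p + r) + 2 * k * p by ring,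
      apply_add_two_mul_natCast_mul hp h1 (by omega), h2 (p + r) (by omega) (by omega),
      show 2 * p - (p + r) = p - r by ring]
    push_cast
    ring

/-- Unfolding of the Gordon–Litherland–Murasugi signature recursion for `p` even:
if `f(q) = f(q − 2p) − p²` for `q > 2p` and `f(q) = 2 − p² − f(2p − q)` for
`p ≤ q < 2p`, then for `n ≥ 1` and `0 < r < p`:
`f(np + r) = f(r) − np²/2` when `n` is even, and
`f(np + r) = −f(p − r) − (n + 1)p²/2 + 2` when `n` is odd. -/
theorem glm_recursion_even (p : ℤ) (hp : 4 ≤ p) (hpeven : Even p) (f : ℤ → ℝ)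
    (h1 : ∀ q : ℤ, 2 * p < q → f q = f (q - 2 * p) - (p : ℝ) ^ 2)
    (h2 : ∀ q : ℤ, p ≤ q → q < 2 * p → f q = 2 - (p : ℝ) ^ 2 - f (2 * p - q)) :
    ∀ n r : ℤ, 1 ≤ n → 0 < r → r < p →
      (Even n → f (n * p + r) = f r - (n : ℝ) * (p : ℝ) ^ 2 / 2) ∧
      (Odd n → f (n * p + r) = -f (p - r) - ((n : ℝ) + 1) * (p : ℝ) ^ 2 / 2 + 2) :=
  glm_recursion_even_general p f h1 h2
end

section
/- Fix an integer n ≥ 0 and define d : ℤ × ℤ → ℕ by: d(m, 1) = 2ⁿ·C(n, 1−m) if 0 ≤ 1−m ≤ n and 0 otherwise; d(m, 0) = (1 if m = 0 else 0) + (2^(n+1)·C(n, −m) if 0 ≤ −m ≤ n and 0 otherwise); d(m, −1) = 2ⁿ·C(n, −1−m) if 0 ≤ −1−m ≤ n and 0 otherwise; and d(m, s) = 0 for all other s. Then the set {s − m : d(m, s) ≠ 0} equals {0, 1, …, n}. In particular, (max − min of this set) + 1 = n + 1. -/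
/-- Hedden's computation: the dimension of `HFK-hat` of the `n`-th iterated positive
untwisted Whitehead double of the figure-eight knot in Maslov grading `m` and
Alexander grading `s`. -/
def hfkDim (n : ℕ) (m s : ℤ) : ℕ :=
  if s = 1 then
    (if 0 ≤ 1 - m ∧ 1 - m ≤ (n : ℤ) then 2 ^ n * n.choose (1 - m).toNat else 0)
  else if s = 0 then
    (if m = 0 then 1 else 0) +
      (if 0 ≤ -m ∧ -m ≤ (n : ℤ) then 2 ^ (n + 1) * n.choose (-m).toNat else 0)
  else if s = -1 then
    (if 0 ≤ -1 - m ∧ -1 - m ≤ (n : ℤ) then 2 ^ n * n.choose (-1 - m).toNat else 0)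
  else 0

/-!
Each of the three Alexander gradings `s = 1, 0, -1` carries a binomial row shifted so that its
support in the Maslov grading is `m ∈ [s - n, s]`, hence `δ = s - m ∈ [0, n]` throughout; conversely
every `δ ∈ [0, n]` is already realised in Alexander grading `0`, at `m = -δ`.
-/

theorem sub_mem_Icc_of_hfkDim_ne_zero {n : ℕ} {m s : ℤ} (h : hfkDim n m s ≠ 0) :
    s - m ∈ Set.Icc (0 : ℤ) n := by
  unfold hfkDim at h
  split_ifs at h <;> subst_vars <;> constructor <;> omega

theorem hfkDim_neg_zero_ne_zero {n : ℕ} {δ : ℤ} (hδ : δ ∈ Set.Icc (0 : ℤ) n) :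
    hfkDim n (-δ) 0 ≠ 0 := by
  obtain ⟨hδ₀, hδn⟩ := hδ
  have hchoose : 0 < n.choose δ.toNat := Nat.choose_pos (by omega)
  have hrow : hfkDim n (-δ) 0 = (if -δ = 0 then 1 else 0) + 2 ^ (n + 1) * n.choose δ.toNat := by
    simp [hfkDim, hδ₀, hδn]
  rw [hrow]
  positivity

theorem hfkDim_deltaGradings_eq_Icc (n : ℕ) :
    {δ : ℤ | ∃ m s : ℤ, hfkDim n m s ≠ 0 ∧ δ = s - m} = Set.Icc (0 : ℤ) n := by
  ext δ
  constructor
  · rintro ⟨m, s, h, rfl⟩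
    exact sub_mem_Icc_of_hfkDim_ne_zero h
  · intro hδ
    exact ⟨-δ, 0, hfkDim_neg_zero_ne_zero hδ, by ring⟩

/-- The set of `δ`-gradings `δ = s − m` supporting `HFK-hat(W_n)` is exactly
`{0, 1, …, n}`; in particular the width `(max − min) + 1` equals `n + 1`. -/
theorem hfk_width_whitehead (n : ℕ) :
    {δ : ℤ | ∃ m s : ℤ, hfkDim n m s ≠ 0 ∧ δ = s - m} = Set.Icc (0 : ℤ) (n : ℤ) ∧
      sSup {δ : ℤ | ∃ m s : ℤ, hfkDim n m s ≠ 0 ∧ δ = s - m} -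
        sInf {δ : ℤ | ∃ m s : ℤ, hfkDim n m s ≠ 0 ∧ δ = s - m} + 1 = (n : ℤ) + 1 := by
  have hn : (0 : ℤ) ≤ n := Int.natCast_nonneg n
  rw [hfkDim_deltaGradings_eq_Icc, csSup_Icc hn, csInf_Icc hn]
  exact ⟨rfl, by ring⟩
end
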